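/- arXiv:2511.15234 — 4 statements merged into one kernel-verified Lean document; each statement's English description precedes it below -/
import Mathlib

section
/- There is a universal constant C>0 such that for all smooth u,v:ℝ×ℝ³→ℝ and all (t,x)∈[0,∞)×ℝ³: |Q₀(u,v)(t,x)| ≤ C ⟨t+|x|⟩^{-1} ( |Su(t,x)|·Σ_{Z∈V}|Zv(t,x)| + (Σ_{Z∈V}|Zu(t,x)|)·(Σ_{Z∈V}|Zv(t,x)|) ). -/
open MeasureTheory Real

noncomputable section

/-- Spacetime points: index `0` is time, indices `1,2,3` are space. -/
abbrev Pt : Type := Fin 4 → ℝ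

/-- Spatial points in ℝ³. -/
abbrev Sp : Type := Fin 3 → ℝ

/-- Build a spacetime point from a time and a spatial point. -/
def pt (t : ℝ) (x : Sp) : Pt := Fin.cons t x

/-- Partial derivative ∂_i (i = 0 is ∂_t). -/
def pd (i : Fin 4) (u : Pt → ℝ) : Pt → ℝ := fun p => fderiv ℝ u p (Pi.single i 1)

/-- Euclidean norm of a spatial point. -/
def rnorm (x : Sp) : ℝ := Real.sqrt (∑ a, (x a) ^ 2)

/-- Japanese bracket ⟨s⟩ = √(1+s²). -/
def jb (s : ℝ) : ℝ := Real.sqrt (1 + s ^ 2)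

/-- Wave operator ∂_t² − Δ. -/
def box (u : Pt → ℝ) : Pt → ℝ := fun p =>
  pd 0 (pd 0 u) p - (pd 1 (pd 1 u) p + pd 2 (pd 2 u) p + pd 3 (pd 3 u) p)

/-- Rotation Ω_{ab} = x_a ∂_b − x_b ∂_a. -/
def Omg (a b : Fin 4) (u : Pt → ℝ) : Pt → ℝ := fun p => p a * pd b u p - p b * pd a u p

/-- Lorentz boost L_a = x_a ∂_t + t ∂_a. -/
def Lb (a : Fin 4) (u : Pt → ℝ) : Pt → ℝ := fun p => p a * pd 0 u p + p 0 * pd a u p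

/-- Scaling vector field S = t ∂_t + Σ x_a ∂_a. -/
def Sc (u : Pt → ℝ) : Pt → ℝ := fun p => ∑ i, p i * pd i u p

/-- The ten-field family V = {∂_α, Ω_{ab}, L_a}. -/
def VZ : Fin 10 → (Pt → ℝ) → Pt → ℝ :=
  ![pd 0, pd 1, pd 2, pd 3, Omg 1 2, Omg 1 3, Omg 2 3, Lb 1, Lb 2, Lb 3]

/-- The eleven-field family Γ = V ∪ {S}. -/
def GZ : Fin 11 → (Pt → ℝ) → Pt → ℝ :=
  ![pd 0, pd 1, pd 2, pd 3, Omg 1 2, Omg 1 3, Omg 2 3, Lb 1, Lb 2, Lb 3, Sc]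

/-- Composition Z^I of fields from V. -/
def compV (I : List (Fin 10)) (u : Pt → ℝ) : Pt → ℝ := I.foldr (fun i f => VZ i f) u

/-- Composition Γ^I of fields from V ∪ {S}. -/
def compG (I : List (Fin 11)) (u : Pt → ℝ) : Pt → ℝ := I.foldr (fun i f => GZ i f) u

/-- Null form Q₀(u,v) = −∂_t u ∂_t v + Σ_a ∂_a u ∂_a v. -/
def Q0 (u v : Pt → ℝ) : Pt → ℝ := fun p =>
  -(pd 0 u p * pd 0 v p) + ∑ a : Fin 3, pd a.succ u p * pd a.succ v p

/-- Null form Q_{αβ}(u,v) = ∂_α u ∂_β v − ∂_β u ∂_α v. -/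
def Qab (α β : Fin 4) (u v : Pt → ℝ) : Pt → ℝ := fun p =>
  pd α u p * pd β v p - pd β u p * pd α v p

/-- Good derivative G_a = (x_a/r) ∂_t + ∂_a. -/
def Ga (a : Fin 3) (u : Pt → ℝ) : Pt → ℝ := fun p =>
  (p a.succ / Real.sqrt ((p 1) ^ 2 + (p 2) ^ 2 + (p 3) ^ 2)) * pd 0 u p + pd a.succ u p

/-- L² norm of a function on ℝ³. -/
def L2norm (g : Sp → ℝ) : ℝ := (∫ x : Sp, (g x) ^ 2) ^ (1/2 : ℝ)

/-- Spatial partial derivative on ℝ³. -/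
def pd3 (a : Fin 3) (f : Sp → ℝ) : Sp → ℝ := fun x => fderiv ℝ f x (Pi.single a 1)

/-- Composition ∇^I of spatial partial derivatives. -/
def compD (I : List (Fin 3)) (f : Sp → ℝ) : Sp → ℝ := I.foldr (fun a g => pd3 a g) f

/-- Euclidean norm of the spatial gradient. -/
def gradNorm (f : Sp → ℝ) (x : Sp) : ℝ := Real.sqrt (∑ a, (pd3 a f x) ^ 2)


lemma pmul {a b SA SB : ℝ} (ha : |a| ≤ SA) (hb : |b| ≤ SB) : |a * b| ≤ SA * SB := by
  rw [abs_mul]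
  exact mul_le_mul ha hb (abs_nonneg _) ((abs_nonneg a).trans ha)

lemma tri2m (y1 y2 : ℝ) : |y1 - y2| ≤ |y1| + |y2| := by
  have h := abs_add_le y1 (-y2)
  rw [abs_neg] at h
  linarith [h, le_of_eq (congrArg abs (sub_eq_add_neg y1 y2))]

lemma tri3 (y1 y2 y3 : ℝ) : |y1 + y2 + y3| ≤ |y1| + |y2| + |y3| := by
  linarith [abs_add_le (y1 + y2) y3, abs_add_le y1 y2]

lemma tri4p (y1 y2 y3 y4 : ℝ) : |y1 + y2 + y3 + y4| ≤ |y1| + |y2| + |y3| + |y4| := by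
  linarith [abs_add_le (y1 + y2 + y3) y4, tri3 y1 y2 y3]

lemma tri4n (y1 y2 y3 y4 : ℝ) : |(-y1) + (y2 + y3 + y4)| ≤ |y1| + |y2| + |y3| + |y4| := by
  have h1 := abs_add_le (-y1) (y2 + y3 + y4)
  rw [abs_neg] at h1
  linarith [tri3 y2 y3 y4]

lemma tri5 (y1 y2 y3 y4 y5 : ℝ) :
    |y1 + y2 + (y3 + y4 + y5)| ≤ |y1| + |y2| + |y3| + |y4| + |y5| := by
  linarith [abs_add_le (y1 + y2) (y3 + y4 + y5), abs_add_le y1 y2, tri3 y3 y4 y5]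

lemma trisub (X Y Z : ℝ) : |X - Y - Z| ≤ |X| + |Y| + |Z| := by
  linarith [tri2m (X - Y) Z, tri2m X Y]

lemma mem10_0 (w0 w1 w2 w3 w4 w5 w6 w7 w8 w9 : ℝ) :
    |w0| ≤ |w0| + (|w1| + (|w2| + (|w3| + (|w4| + (|w5| + (|w6| + (|w7| + (|w8| + |w9|)))))))) := by
  linarith [abs_nonneg w1, abs_nonneg w2, abs_nonneg w3, abs_nonneg w4, abs_nonneg w5, abs_nonneg w6, abs_nonneg w7, abs_nonneg w8, abs_nonneg w9]

lemma mem10_1 (w0 w1 w2 w3 w4 w5 w6 w7 w8 w9 : ℝ) :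
    |w1| ≤ |w0| + (|w1| + (|w2| + (|w3| + (|w4| + (|w5| + (|w6| + (|w7| + (|w8| + |w9|)))))))) := by
  linarith [abs_nonneg w0, abs_nonneg w2, abs_nonneg w3, abs_nonneg w4, abs_nonneg w5, abs_nonneg w6, abs_nonneg w7, abs_nonneg w8, abs_nonneg w9]

lemma mem10_2 (w0 w1 w2 w3 w4 w5 w6 w7 w8 w9 : ℝ) :
    |w2| ≤ |w0| + (|w1| + (|w2| + (|w3| + (|w4| + (|w5| + (|w6| + (|w7| + (|w8| + |w9|)))))))) := by
  linarith [abs_nonneg w0, abs_nonneg w1, abs_nonneg w3, abs_nonneg w4, abs_nonneg w5, abs_nonneg w6, abs_nonneg w7, abs_nonneg w8, abs_nonneg w9]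

lemma mem10_3 (w0 w1 w2 w3 w4 w5 w6 w7 w8 w9 : ℝ) :
    |w3| ≤ |w0| + (|w1| + (|w2| + (|w3| + (|w4| + (|w5| + (|w6| + (|w7| + (|w8| + |w9|)))))))) := by
  linarith [abs_nonneg w0, abs_nonneg w1, abs_nonneg w2, abs_nonneg w4, abs_nonneg w5, abs_nonneg w6, abs_nonneg w7, abs_nonneg w8, abs_nonneg w9]

lemma mem10_4 (w0 w1 w2 w3 w4 w5 w6 w7 w8 w9 : ℝ) :
    |w4| ≤ |w0| + (|w1| + (|w2| + (|w3| + (|w4| + (|w5| + (|w6| + (|w7| + (|w8| + |w9|)))))))) := by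
  linarith [abs_nonneg w0, abs_nonneg w1, abs_nonneg w2, abs_nonneg w3, abs_nonneg w5, abs_nonneg w6, abs_nonneg w7, abs_nonneg w8, abs_nonneg w9]

lemma mem10_5 (w0 w1 w2 w3 w4 w5 w6 w7 w8 w9 : ℝ) :
    |w5| ≤ |w0| + (|w1| + (|w2| + (|w3| + (|w4| + (|w5| + (|w6| + (|w7| + (|w8| + |w9|)))))))) := by
  linarith [abs_nonneg w0, abs_nonneg w1, abs_nonneg w2, abs_nonneg w3, abs_nonneg w4, abs_nonneg w6, abs_nonneg w7, abs_nonneg w8, abs_nonneg w9]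

lemma mem10_6 (w0 w1 w2 w3 w4 w5 w6 w7 w8 w9 : ℝ) :
    |w6| ≤ |w0| + (|w1| + (|w2| + (|w3| + (|w4| + (|w5| + (|w6| + (|w7| + (|w8| + |w9|)))))))) := by
  linarith [abs_nonneg w0, abs_nonneg w1, abs_nonneg w2, abs_nonneg w3, abs_nonneg w4, abs_nonneg w5, abs_nonneg w7, abs_nonneg w8, abs_nonneg w9]

lemma mem10_7 (w0 w1 w2 w3 w4 w5 w6 w7 w8 w9 : ℝ) :
    |w7| ≤ |w0| + (|w1| + (|w2| + (|w3| + (|w4| + (|w5| + (|w6| + (|w7| + (|w8| + |w9|)))))))) := by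
  linarith [abs_nonneg w0, abs_nonneg w1, abs_nonneg w2, abs_nonneg w3, abs_nonneg w4, abs_nonneg w5, abs_nonneg w6, abs_nonneg w8, abs_nonneg w9]

lemma mem10_8 (w0 w1 w2 w3 w4 w5 w6 w7 w8 w9 : ℝ) :
    |w8| ≤ |w0| + (|w1| + (|w2| + (|w3| + (|w4| + (|w5| + (|w6| + (|w7| + (|w8| + |w9|)))))))) := by
  linarith [abs_nonneg w0, abs_nonneg w1, abs_nonneg w2, abs_nonneg w3, abs_nonneg w4, abs_nonneg w5, abs_nonneg w6, abs_nonneg w7, abs_nonneg w9]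

lemma mem10_9 (w0 w1 w2 w3 w4 w5 w6 w7 w8 w9 : ℝ) :
    |w9| ≤ |w0| + (|w1| + (|w2| + (|w3| + (|w4| + (|w5| + (|w6| + (|w7| + (|w8| + |w9|)))))))) := by
  linarith [abs_nonneg w0, abs_nonneg w1, abs_nonneg w2, abs_nonneg w3, abs_nonneg w4, abs_nonneg w5, abs_nonneg w6, abs_nonneg w7, abs_nonneg w8]

lemma mem10_123 (w0 w1 w2 w3 w4 w5 w6 w7 w8 w9 : ℝ) :
    |w1| + |w2| + |w3| ≤ |w0| + (|w1| + (|w2| + (|w3| + (|w4| + (|w5| + (|w6| + (|w7| + (|w8| + |w9|)))))))) := by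
  linarith [abs_nonneg w0, abs_nonneg w4, abs_nonneg w5, abs_nonneg w6, abs_nonneg w7, abs_nonneg w8, abs_nonneg w9]


set_option maxHeartbeats 1000000 in
theorem core (t x1 x2 x3 r U0 U1 U2 U3 W0 W1 W2 W3 SA SB : ℝ)
    (ht : 0 ≤ t) (hr : 0 ≤ r) (hr2 : r ^ 2 = x1 ^ 2 + x2 ^ 2 + x3 ^ 2)
    (hA0 : 0 ≤ SA) (hB0 : 0 ≤ SB)
    (hAU0 : |U0| ≤ SA) (hAU1 : |U1| ≤ SA) (hAU2 : |U2| ≤ SA) (hAU3 : |U3| ≤ SA)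
    (hAO1 : |x1 * U2 - x2 * U1| ≤ SA) (hAO2 : |x1 * U3 - x3 * U1| ≤ SA)
    (hAO3 : |x2 * U3 - x3 * U2| ≤ SA)
    (hAL1 : |x1 * U0 + t * U1| ≤ SA) (hAL2 : |x2 * U0 + t * U2| ≤ SA)
    (hAL3 : |x3 * U0 + t * U3| ≤ SA)
    (hBW0 : |W0| ≤ SB) (hBW1 : |W1| ≤ SB) (hBW2 : |W2| ≤ SB) (hBW3 : |W3| ≤ SB)
    (hBW123 : |W1| + |W2| + |W3| ≤ SB)
    (hBO1 : |x1 * W2 - x2 * W1| ≤ SB) (hBO2 : |x1 * W3 - x3 * W1| ≤ SB)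
    (hBO3 : |x2 * W3 - x3 * W2| ≤ SB)
    (hBL1 : |x1 * W0 + t * W1| ≤ SB) (hBL2 : |x2 * W0 + t * W2| ≤ SB)
    (hBL3 : |x3 * W0 + t * W3| ≤ SB) :
    |-(U0 * W0) + (U1 * W1 + U2 * W2 + U3 * W3)| ≤
      100 * (jb (t + r))⁻¹ *
        (|t * U0 + x1 * U1 + x2 * U2 + x3 * U3| * SB + SA * SB) := by
  have habs1 : |x1| ≤ r := by
    calc |x1| = Real.sqrt (x1 ^ 2) := (Real.sqrt_sq_eq_abs x1).symm
      _ ≤ Real.sqrt (r ^ 2) := Real.sqrt_le_sqrt (by nlinarith [sq_nonneg x2, sq_nonneg x3])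
      _ = r := Real.sqrt_sq hr
  have habs2 : |x2| ≤ r := by
    calc |x2| = Real.sqrt (x2 ^ 2) := (Real.sqrt_sq_eq_abs x2).symm
      _ ≤ Real.sqrt (r ^ 2) := Real.sqrt_le_sqrt (by nlinarith [sq_nonneg x1, sq_nonneg x3])
      _ = r := Real.sqrt_sq hr
  have habs3 : |x3| ≤ r := by
    calc |x3| = Real.sqrt (x3 ^ 2) := (Real.sqrt_sq_eq_abs x3).symm
      _ ≤ Real.sqrt (r ^ 2) := Real.sqrt_le_sqrt (by nlinarith [sq_nonneg x1, sq_nonneg x2])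
      _ = r := Real.sqrt_sq hr
  have hjb_def : jb (t + r) = Real.sqrt (1 + (t + r) ^ 2) := rfl
  have hjbpos : 0 < jb (t + r) := by rw [hjb_def]; positivity
  rw [show (100:ℝ) * (jb (t + r))⁻¹ *
      (|t * U0 + x1 * U1 + x2 * U2 + x3 * U3| * SB + SA * SB) =
      (100 * (|t * U0 + x1 * U1 + x2 * U2 + x3 * U3| * SB + SA * SB)) / jb (t + r) from by
        ring, le_div_iff₀ hjbpos]
  have hQtri : |-(U0 * W0) + (U1 * W1 + U2 * W2 + U3 * W3)| ≤ 4 * (SA * SB) := by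
    have h := tri4n (U0 * W0) (U1 * W1) (U2 * W2) (U3 * W3)
    linarith [pmul hAU0 hBW0, pmul hAU1 hBW1, pmul hAU2 hBW2, pmul hAU3 hBW3]
  have hSuB0 : 0 ≤ |t * U0 + x1 * U1 + x2 * U2 + x3 * U3| * SB :=
    mul_nonneg (abs_nonneg _) hB0
  have hAB0 : 0 ≤ SA * SB := mul_nonneg hA0 hB0
  rcases le_or_gt (t + r) 1 with hs1 | hs1
  · -- small region
    have hjb2 : jb (t + r) ≤ 2 := by
      rw [hjb_def]
      have h4 : (1:ℝ) + (t + r) ^ 2 ≤ 2 ^ 2 := by nlinarith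
      calc Real.sqrt (1 + (t + r) ^ 2) ≤ Real.sqrt (2 ^ 2) := Real.sqrt_le_sqrt h4
        _ = 2 := Real.sqrt_sq (by norm_num)
    have h1 := mul_le_mul_of_nonneg_left hjb2
      (abs_nonneg (-(U0 * W0) + (U1 * W1 + U2 * W2 + U3 * W3)))
    linarith
  · have hjb2 : jb (t + r) ≤ 2 * (t + r) := by
      rw [hjb_def]
      have h4 : (1:ℝ) + (t + r) ^ 2 ≤ (2 * (t + r)) ^ 2 := by nlinarith
      calc Real.sqrt (1 + (t + r) ^ 2) ≤ Real.sqrt ((2 * (t + r)) ^ 2) := Real.sqrt_le_sqrt h4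
        _ = 2 * (t + r) := Real.sqrt_sq (by linarith)
    have hQjb := mul_le_mul_of_nonneg_left hjb2
      (abs_nonneg (-(U0 * W0) + (U1 * W1 + U2 * W2 + U3 * W3)))
    rcases le_or_gt ((t + r) / 3) t with hts | hts
    · -- interior region t ≥ (t+r)/3
      have ht0 : 0 < t := by linarith
      have hx1t : |x1| ≤ 2 * t := by linarith
      have hx2t : |x2| ≤ 2 * t := by linarith
      have hx3t : |x3| ≤ 2 * t := by linarith
      have idA : t ^ 2 * (-(U0 * W0) + (U1 * W1 + U2 * W2 + U3 * W3)) =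
          -(t * (t * U0 + x1 * U1 + x2 * U2 + x3 * U3) * W0)
          + t * ((x1 * U0 + t * U1) * W1 + (x2 * U0 + t * U2) * W2 + (x3 * U0 + t * U3) * W3)
          + (x1 * ((x1 * U0 + t * U1) * W0 - U0 * (x1 * W0 + t * W1))
            + x2 * ((x2 * U0 + t * U2) * W0 - U0 * (x2 * W0 + t * W2))
            + x3 * ((x3 * U0 + t * U3) * W0 - U0 * (x3 * W0 + t * W3))) := by ring
      have hB1 : |-(t * (t * U0 + x1 * U1 + x2 * U2 + x3 * U3) * W0)| ≤
          t * (|t * U0 + x1 * U1 + x2 * U2 + x3 * U3| * SB) := by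
        rw [abs_neg, abs_mul, abs_mul, abs_of_nonneg ht]
        have h := mul_le_mul_of_nonneg_left hBW0
          (mul_nonneg ht (abs_nonneg (t * U0 + x1 * U1 + x2 * U2 + x3 * U3)))
        linarith
      have hB2 : |t * ((x1 * U0 + t * U1) * W1 + (x2 * U0 + t * U2) * W2
          + (x3 * U0 + t * U3) * W3)| ≤ t * (3 * (SA * SB)) := by
        rw [abs_mul, abs_of_nonneg ht]
        have h := tri3 ((x1 * U0 + t * U1) * W1) ((x2 * U0 + t * U2) * W2)
          ((x3 * U0 + t * U3) * W3)
        have hsum : |(x1 * U0 + t * U1) * W1 + (x2 * U0 + t * U2) * W2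
            + (x3 * U0 + t * U3) * W3| ≤ 3 * (SA * SB) := by
          linarith [pmul hAL1 hBW1, pmul hAL2 hBW2, pmul hAL3 hBW3]
        exact mul_le_mul_of_nonneg_left hsum ht
      have hC1 : |x1 * ((x1 * U0 + t * U1) * W0 - U0 * (x1 * W0 + t * W1))| ≤
          2 * t * (2 * (SA * SB)) := by
        rw [abs_mul]
        refine mul_le_mul hx1t ?_ (abs_nonneg _) (by linarith)
        have h := tri2m ((x1 * U0 + t * U1) * W0) (U0 * (x1 * W0 + t * W1))
        linarith [pmul hAL1 hBW0, pmul hAU0 hBL1]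
      have hC2 : |x2 * ((x2 * U0 + t * U2) * W0 - U0 * (x2 * W0 + t * W2))| ≤
          2 * t * (2 * (SA * SB)) := by
        rw [abs_mul]
        refine mul_le_mul hx2t ?_ (abs_nonneg _) (by linarith)
        have h := tri2m ((x2 * U0 + t * U2) * W0) (U0 * (x2 * W0 + t * W2))
        linarith [pmul hAL2 hBW0, pmul hAU0 hBL2]
      have hC3 : |x3 * ((x3 * U0 + t * U3) * W0 - U0 * (x3 * W0 + t * W3))| ≤
          2 * t * (2 * (SA * SB)) := by
        rw [abs_mul]
        refine mul_le_mul hx3t ?_ (abs_nonneg _) (by linarith)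
        have h := tri2m ((x3 * U0 + t * U3) * W0) (U0 * (x3 * W0 + t * W3))
        linarith [pmul hAL3 hBW0, pmul hAU0 hBL3]
      have hid : t ^ 2 * |-(U0 * W0) + (U1 * W1 + U2 * W2 + U3 * W3)| ≤
          t * (|t * U0 + x1 * U1 + x2 * U2 + x3 * U3| * SB) + 15 * (t * (SA * SB)) := by
        have e : t ^ 2 * |-(U0 * W0) + (U1 * W1 + U2 * W2 + U3 * W3)| =
            |t ^ 2 * (-(U0 * W0) + (U1 * W1 + U2 * W2 + U3 * W3))| := by
          rw [abs_mul, abs_of_nonneg (sq_nonneg t)]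
        rw [e, idA]
        have h := tri5 (-(t * (t * U0 + x1 * U1 + x2 * U2 + x3 * U3) * W0))
          (t * ((x1 * U0 + t * U1) * W1 + (x2 * U0 + t * U2) * W2 + (x3 * U0 + t * U3) * W3))
          (x1 * ((x1 * U0 + t * U1) * W0 - U0 * (x1 * W0 + t * W1)))
          (x2 * ((x2 * U0 + t * U2) * W0 - U0 * (x2 * W0 + t * W2)))
          (x3 * ((x3 * U0 + t * U3) * W0 - U0 * (x3 * W0 + t * W3)))
        linarith
      have hstep : t * |-(U0 * W0) + (U1 * W1 + U2 * W2 + U3 * W3)| ≤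
          |t * U0 + x1 * U1 + x2 * U2 + x3 * U3| * SB + 15 * (SA * SB) := by
        have h2 : t * (t * |-(U0 * W0) + (U1 * W1 + U2 * W2 + U3 * W3)|) ≤
            t * (|t * U0 + x1 * U1 + x2 * U2 + x3 * U3| * SB + 15 * (SA * SB)) := by
          linarith [hid]
        exact le_of_mul_le_mul_left h2 ht0
      have h3 : (t + r) * |-(U0 * W0) + (U1 * W1 + U2 * W2 + U3 * W3)| ≤
          3 * (t * |-(U0 * W0) + (U1 * W1 + U2 * W2 + U3 * W3)|) := by
        have h := mul_le_mul_of_nonneg_right (show t + r ≤ 3 * t by linarith)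
          (abs_nonneg (-(U0 * W0) + (U1 * W1 + U2 * W2 + U3 * W3)))
        linarith
      linarith
    · -- exterior region t < (t+r)/3
      have hrt : (t + r) / 3 ≤ r - t := by linarith
      have idB' : (t ^ 2 - r ^ 2) * (-(U0 * W0) + (U1 * W1 + U2 * W2 + U3 * W3)) =
          ((x1 * U0 + t * U1) * (x1 * W0 + t * W1) + (x2 * U0 + t * U2) * (x2 * W0 + t * W2)
            + (x3 * U0 + t * U3) * (x3 * W0 + t * W3))
          - (t * U0 + x1 * U1 + x2 * U2 + x3 * U3) * (t * W0 + x1 * W1 + x2 * W2 + x3 * W3)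
          - ((x1 * U2 - x2 * U1) * (x1 * W2 - x2 * W1) + (x1 * U3 - x3 * U1) * (x1 * W3 - x3 * W1)
            + (x2 * U3 - x3 * U2) * (x2 * W3 - x3 * W2)) := by
        rw [hr2]; ring
      have hnp : t ^ 2 - r ^ 2 ≤ 0 := by
        nlinarith [mul_nonneg (show (0:ℝ) ≤ r - t by linarith)
          (show (0:ℝ) ≤ r + t by linarith)]
      have hneg : |t ^ 2 - r ^ 2| = r ^ 2 - t ^ 2 := by
        rw [abs_of_nonpos hnp]; ring
      have hSv : |t * W0 + x1 * W1 + x2 * W2 + x3 * W3| ≤ (t + r) * SB := by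
        have h := tri4p (t * W0) (x1 * W1) (x2 * W2) (x3 * W3)
        have e0 : |t * W0| = t * |W0| := by rw [abs_mul, abs_of_nonneg ht]
        have e1 : |x1 * W1| = |x1| * |W1| := abs_mul _ _
        have e2 : |x2 * W2| = |x2| * |W2| := abs_mul _ _
        have e3 : |x3 * W3| = |x3| * |W3| := abs_mul _ _
        have f0 := mul_le_mul_of_nonneg_left hBW0 ht
        have f1 := mul_le_mul_of_nonneg_right habs1 (abs_nonneg W1)
        have f2 := mul_le_mul_of_nonneg_right habs2 (abs_nonneg W2)
        have f3 := mul_le_mul_of_nonneg_right habs3 (abs_nonneg W3)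
        have fsum := mul_le_mul_of_nonneg_left hBW123 hr
        linarith [h, f0, f1, f2, f3, fsum]
      have hmain3 : (r ^ 2 - t ^ 2) * |-(U0 * W0) + (U1 * W1 + U2 * W2 + U3 * W3)| ≤
          6 * (SA * SB) + |t * U0 + x1 * U1 + x2 * U2 + x3 * U3| * ((t + r) * SB) := by
        have e : (r ^ 2 - t ^ 2) * |-(U0 * W0) + (U1 * W1 + U2 * W2 + U3 * W3)| =
            |(t ^ 2 - r ^ 2) * (-(U0 * W0) + (U1 * W1 + U2 * W2 + U3 * W3))| := by
          rw [abs_mul, hneg]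
        rw [e, idB']
        have h := trisub
          ((x1 * U0 + t * U1) * (x1 * W0 + t * W1) + (x2 * U0 + t * U2) * (x2 * W0 + t * W2)
            + (x3 * U0 + t * U3) * (x3 * W0 + t * W3))
          ((t * U0 + x1 * U1 + x2 * U2 + x3 * U3) * (t * W0 + x1 * W1 + x2 * W2 + x3 * W3))
          ((x1 * U2 - x2 * U1) * (x1 * W2 - x2 * W1) + (x1 * U3 - x3 * U1) * (x1 * W3 - x3 * W1)
            + (x2 * U3 - x3 * U2) * (x2 * W3 - x3 * W2))
        have hLL := tri3 ((x1 * U0 + t * U1) * (x1 * W0 + t * W1))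
          ((x2 * U0 + t * U2) * (x2 * W0 + t * W2)) ((x3 * U0 + t * U3) * (x3 * W0 + t * W3))
        have hOO := tri3 ((x1 * U2 - x2 * U1) * (x1 * W2 - x2 * W1))
          ((x1 * U3 - x3 * U1) * (x1 * W3 - x3 * W1)) ((x2 * U3 - x3 * U2) * (x2 * W3 - x3 * W2))
        have hSS : |(t * U0 + x1 * U1 + x2 * U2 + x3 * U3) *
            (t * W0 + x1 * W1 + x2 * W2 + x3 * W3)| ≤
            |t * U0 + x1 * U1 + x2 * U2 + x3 * U3| * ((t + r) * SB) := by
          rw [abs_mul]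
          exact mul_le_mul_of_nonneg_left hSv (abs_nonneg _)
        linarith [pmul hAL1 hBL1, pmul hAL2 hBL2, pmul hAL3 hBL3,
          pmul hAO1 hBO1, pmul hAO2 hBO2, pmul hAO3 hBO3]
      have hlow : (t + r) ^ 2 ≤ 3 * (r ^ 2 - t ^ 2) := by
        nlinarith [mul_le_mul_of_nonneg_right hrt (show (0:ℝ) ≤ t + r by linarith)]
      have hs2 := mul_le_mul_of_nonneg_right hlow
        (abs_nonneg (-(U0 * W0) + (U1 * W1 + U2 * W2 + U3 * W3)))
      have hstep : (t + r) * |-(U0 * W0) + (U1 * W1 + U2 * W2 + U3 * W3)| ≤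
          18 * (SA * SB) + 3 * (|t * U0 + x1 * U1 + x2 * U2 + x3 * U3| * SB) := by
        have hx : (t + r) * ((t + r) * |-(U0 * W0) + (U1 * W1 + U2 * W2 + U3 * W3)|) ≤
            (t + r) * (18 * (SA * SB) + 3 * (|t * U0 + x1 * U1 + x2 * U2 + x3 * U3| * SB)) := by
          have hone : 0 ≤ (t + r - 1) * (SA * SB) := mul_nonneg (by linarith) hAB0
          linarith [hs2, hmain3, hone]
        exact le_of_mul_le_mul_left hx (by linarith)
      linarith

/-- Q₀ gains a factor ⟨t+|x|⟩⁻¹ against the fields S and V. -/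
theorem stmt_6 :
    ∃ C : ℝ, 0 < C ∧ ∀ u v : Pt → ℝ, ContDiff ℝ (⊤ : ℕ∞) u → ContDiff ℝ (⊤ : ℕ∞) v →
      ∀ (t : ℝ), 0 ≤ t → ∀ x : Sp,
        |Q0 u v (pt t x)| ≤ C * (jb (t + rnorm x))⁻¹ *
          (|Sc u (pt t x)| * (∑ i : Fin 10, |VZ i v (pt t x)|) +
           (∑ i : Fin 10, |VZ i u (pt t x)|) * (∑ i : Fin 10, |VZ i v (pt t x)|)) := by
  refine ⟨100, by norm_num, ?_⟩
  intro u v _ _ t ht x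
  have hrn : rnorm x = Real.sqrt (∑ a, x a ^ 2) := rfl
  have hr : 0 ≤ rnorm x := by rw [hrn]; exact Real.sqrt_nonneg _
  have hr2 : (rnorm x) ^ 2 = x 0 ^ 2 + x 1 ^ 2 + x 2 ^ 2 := by
    rw [hrn, Real.sq_sqrt (by positivity), Fin.sum_univ_three]
  have hp0 : pt t x 0 = t := rfl
  have hp1 : pt t x 1 = x 0 := rfl
  have hp2 : pt t x 2 = x 1 := rfl
  have hp3 : pt t x 3 = x 2 := rfl
  have e1 : (Fin.succ (0 : Fin 3)) = (1 : Fin 4) := rfl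
  have e2 : (Fin.succ (1 : Fin 3)) = (2 : Fin 4) := rfl
  have e3 : (Fin.succ (2 : Fin 3)) = (3 : Fin 4) := rfl
  simp only [Q0, Sc, Fin.sum_univ_three, Fin.sum_univ_four, e1, e2, e3, hp0, hp1, hp2, hp3]
  simp only [VZ, Omg, Lb, Fin.sum_univ_succ, Fin.sum_univ_zero, Matrix.cons_val_zero,
    Matrix.cons_val_succ, Matrix.cons_val_one, Matrix.head_cons, add_zero, hp0, hp1, hp2, hp3]
  exact core t (x 0) (x 1) (x 2) (rnorm x) _ _ _ _ _ _ _ _ _ _ ht hr hr2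
    (by positivity) (by positivity)
    (mem10_0 _ _ _ _ _ _ _ _ _ _) (mem10_1 _ _ _ _ _ _ _ _ _ _)
    (mem10_2 _ _ _ _ _ _ _ _ _ _) (mem10_3 _ _ _ _ _ _ _ _ _ _)
    (mem10_4 _ _ _ _ _ _ _ _ _ _) (mem10_5 _ _ _ _ _ _ _ _ _ _)
    (mem10_6 _ _ _ _ _ _ _ _ _ _) (mem10_7 _ _ _ _ _ _ _ _ _ _)
    (mem10_8 _ _ _ _ _ _ _ _ _ _) (mem10_9 _ _ _ _ _ _ _ _ _ _)
    (mem10_0 _ _ _ _ _ _ _ _ _ _) (mem10_1 _ _ _ _ _ _ _ _ _ _)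
    (mem10_2 _ _ _ _ _ _ _ _ _ _) (mem10_3 _ _ _ _ _ _ _ _ _ _)
    (mem10_123 _ _ _ _ _ _ _ _ _ _)
    (mem10_4 _ _ _ _ _ _ _ _ _ _) (mem10_5 _ _ _ _ _ _ _ _ _ _)
    (mem10_6 _ _ _ _ _ _ _ _ _ _) (mem10_7 _ _ _ _ _ _ _ _ _ _)
    (mem10_8 _ _ _ _ _ _ _ _ _ _) (mem10_9 _ _ _ _ _ _ _ _ _ _)
end
end

section
/- There is a universal constant C>0 such that for all smooth u,v:ℝ×ℝ³→ℝ, all α,β∈{0,1,2,3}, and all (t,x)∈[0,∞)×ℝ³: |Q_{αβ}(u,v)(t,x)| ≤ C ⟨t+|x|⟩^{-1} ( Σ_{Z∈V}|Zu(t,x)|·|∂v(t,x)| + |∂u(t,x)|·Σ_{Z∈V}|Zv(t,x)| ), where |∂f| := Σ_{γ=0}³ |∂_γ f|. -/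
open MeasureTheory Real

noncomputable section

/-! With `y = (-t, x)` the point with its time index lowered and `Ω_{ij} = y_i ∂_j - y_j ∂_i`, the
six `Ω_{ij}` with `i < j` are, up to sign, the rotations and boosts of `V`, and the null form obeys
the polynomial identity `y_k Q_{αβ}(u,v) = ∂_k u Ω_{αβ} v + Ω_{kα} u ∂_β v - Ω_{kβ} u ∂_α v`.
Summing over `k` bounds `(1 + t + |x₁| + |x₂| + |x₃|) |Q_{αβ}(u,v)|`, and for `t ≥ 0` this weight
dominates `⟨t + |x|⟩`. -/

def wedge {ι : Type*} (f g : ι → ℝ) (i j : ι) : ℝ := f i * g j - f j * g i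

section Wedge

variable {ι : Type*}

lemma wedge_self (f g : ι → ℝ) (i : ι) : wedge f g i i = 0 := sub_self _

lemma wedge_swap (f g : ι → ℝ) (i j : ι) : wedge f g j i = -wedge f g i j := by
  unfold wedge; ring

lemma mul_wedge_eq (y f g : ι → ℝ) (k α β : ι) :
    y k * wedge f g α β = f k * wedge y g α β + wedge y f k α * g β - wedge y f k β * g α := by
  unfold wedge; ring

lemma abs_wedge_le_of_forall_lt [LinearOrder ι] {f g : ι → ℝ} {S : ℝ} (hS : 0 ≤ S)
    (h : ∀ i j, i < j → |wedge f g i j| ≤ S) (i j : ι) : |wedge f g i j| ≤ S := by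
  rcases lt_trichotomy i j with hij | rfl | hji
  · exact h i j hij
  · rwa [wedge_self, abs_zero]
  · rw [wedge_swap, abs_neg]; exact h j i hji

lemma abs_wedge_le {f g : ι → ℝ} {Tf Tg : ℝ} (hf : ∀ i, |f i| ≤ Tf) (hg : ∀ i, |g i| ≤ Tg)
    (i j : ι) : |wedge f g i j| ≤ 2 * (Tf * Tg) := by
  have hTf : 0 ≤ Tf := (abs_nonneg _).trans (hf i)
  have hTg : 0 ≤ Tg := (abs_nonneg _).trans (hg i)
  calc |wedge f g i j| ≤ |f i| * |g j| + |f j| * |g i| := by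
        rw [wedge, ← abs_mul, ← abs_mul]; exact abs_sub _ _
    _ ≤ Tf * Tg + Tf * Tg := by gcongr <;> first | exact hf _ | exact hg _
    _ = 2 * (Tf * Tg) := by ring

lemma abs_mul_abs_wedge_le {y f g : ι → ℝ} {Tf Tg Sf Sg : ℝ}
    (hf : ∀ i, |f i| ≤ Tf) (hg : ∀ i, |g i| ≤ Tg)
    (hyf : ∀ i j, |wedge y f i j| ≤ Sf) (hyg : ∀ i j, |wedge y g i j| ≤ Sg) (k α β : ι) :
    |y k| * |wedge f g α β| ≤ Tf * Sg + 2 * (Sf * Tg) := by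
  have hTf : 0 ≤ Tf := (abs_nonneg _).trans (hf k)
  have hTg : 0 ≤ Tg := (abs_nonneg _).trans (hg k)
  have hSf : 0 ≤ Sf := (abs_nonneg _).trans (hyf k k)
  rw [← abs_mul, mul_wedge_eq]
  calc |f k * wedge y g α β + wedge y f k α * g β - wedge y f k β * g α|
      ≤ |f k| * |wedge y g α β| + |wedge y f k α| * |g β| + |wedge y f k β| * |g α| := by
        rw [← abs_mul, ← abs_mul, ← abs_mul]
        exact (abs_sub _ _).trans (add_le_add_left (abs_add_le _ _) _)
    _ ≤ Tf * Sg + Sf * Tg + Sf * Tg := by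
        gcongr <;> first | exact hf _ | exact hg _ | exact hyf _ _ | exact hyg _ _
    _ = Tf * Sg + 2 * (Sf * Tg) := by ring

theorem one_add_sum_abs_mul_abs_wedge_le [Fintype ι] {y f g : ι → ℝ} {Tf Tg Sf Sg : ℝ}
    (hf : ∀ i, |f i| ≤ Tf) (hg : ∀ i, |g i| ≤ Tg) (hTSf : Tf ≤ Sf) (hTSg : Tg ≤ Sg)
    (hyf : ∀ i j, |wedge y f i j| ≤ Sf) (hyg : ∀ i j, |wedge y g i j| ≤ Sg) (α β : ι) :
    (1 + ∑ k, |y k|) * |wedge f g α β| ≤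
      (2 * Fintype.card ι + 1) * (Sf * Tg + Tf * Sg) := by
  have hTf : 0 ≤ Tf := (abs_nonneg _).trans (hf α)
  have hTg : 0 ≤ Tg := (abs_nonneg _).trans (hg α)
  set A := Sf * Tg + Tf * Sg
  have hQ : |wedge f g α β| ≤ A := by
    have h1 : Tf * Tg ≤ Sf * Tg := by gcongr
    have h2 : Tf * Tg ≤ Tf * Sg := by gcongr
    linarith [abs_wedge_le hf hg α β]
  have hyQ (k : ι) : |y k| * |wedge f g α β| ≤ 2 * A := by
    have : 0 ≤ Tf * Sg := mul_nonneg hTf (hTg.trans hTSg)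
    linarith [abs_mul_abs_wedge_le hf hg hyf hyg k α β]
  calc (1 + ∑ k, |y k|) * |wedge f g α β| = |wedge f g α β| + ∑ k, |y k| * |wedge f g α β| := by
        rw [add_mul, one_mul, Finset.sum_mul]
    _ ≤ A + ∑ _k : ι, 2 * A := add_le_add hQ (Finset.sum_le_sum fun k _ => hyQ k)
    _ = (2 * Fintype.card ι + 1) * A := by
        rw [Finset.sum_const, Finset.card_univ, nsmul_eq_mul]; ring

end Wedge

def lowerIndex (p : Pt) : Pt := Function.update p 0 (-p 0)

lemma exists_abs_wedge_lowerIndex_eq (u : Pt → ℝ) (p : Pt) {i j : Fin 4} (hij : i < j) :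
    ∃ k : Fin 10, |wedge (lowerIndex p) (fun γ => pd γ u p) i j| = |VZ k u p| := by
  fin_cases i <;> fin_cases j <;> simp at hij
  · exact ⟨7, by rw [← abs_neg]; simp [wedge, lowerIndex, VZ, Lb]⟩
  · exact ⟨8, by rw [← abs_neg]; simp [wedge, lowerIndex, VZ, Lb]⟩
  · exact ⟨9, by rw [← abs_neg]; simp [wedge, lowerIndex, VZ, Lb]⟩
  · exact ⟨4, by simp [wedge, lowerIndex, VZ, Omg]⟩
  · exact ⟨5, by simp [wedge, lowerIndex, VZ, Omg]⟩
  · exact ⟨6, by simp [wedge, lowerIndex, VZ, Omg]⟩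

lemma abs_wedge_lowerIndex_le (u : Pt → ℝ) (p : Pt) (i j : Fin 4) :
    |wedge (lowerIndex p) (fun γ => pd γ u p) i j| ≤ ∑ k : Fin 10, |VZ k u p| := by
  refine abs_wedge_le_of_forall_lt (by positivity) (fun i j hij => ?_) i j
  obtain ⟨k, hk⟩ := exists_abs_wedge_lowerIndex_eq u p hij
  rw [hk]
  exact Finset.single_le_sum (f := fun k => |VZ k u p|) (fun _ _ => abs_nonneg _)
    (Finset.mem_univ k)

lemma sum_abs_pd_le_sum_abs_VZ (u : Pt → ℝ) (p : Pt) :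
    ∑ γ : Fin 4, |pd γ u p| ≤ ∑ k : Fin 10, |VZ k u p| := by
  simp [Fin.sum_univ_succ, VZ]
  positivity

lemma jb_le_one_add_abs (s : ℝ) : jb s ≤ 1 + |s| := by
  rw [jb, Real.sqrt_le_left (by positivity)]
  nlinarith [abs_nonneg s, sq_abs s]

lemma rnorm_le_sum_abs (x : Sp) : rnorm x ≤ ∑ a, |x a| := by
  rw [rnorm, Real.sqrt_le_left (by positivity)]
  simpa only [sq_abs] using
    Finset.sum_sq_le_sq_sum_of_nonneg (s := Finset.univ) (fun a _ => abs_nonneg (x a))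

lemma jb_le_one_add_sum_abs_lowerIndex {t : ℝ} (ht : 0 ≤ t) (x : Sp) :
    jb (t + rnorm x) ≤ 1 + ∑ k, |lowerIndex (pt t x) k| := by
  have hsum : ∑ k, |lowerIndex (pt t x) k| = t + ∑ a, |x a| := by
    simp [Fin.sum_univ_succ, lowerIndex, pt, abs_of_nonneg ht]
  rw [hsum, ← add_assoc]
  refine (jb_le_one_add_abs _).trans ?_
  rw [abs_of_nonneg (show 0 ≤ t + rnorm x from add_nonneg ht (Real.sqrt_nonneg _))]
  linarith [rnorm_le_sum_abs x]

/-- Q_{αβ} gains a factor ⟨t+|x|⟩⁻¹ against the fields of V. -/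
theorem stmt_7 :
    ∃ C : ℝ, 0 < C ∧ ∀ u v : Pt → ℝ, ContDiff ℝ (⊤ : ℕ∞) u → ContDiff ℝ (⊤ : ℕ∞) v →
      ∀ α β : Fin 4, ∀ (t : ℝ), 0 ≤ t → ∀ x : Sp,
        |Qab α β u v (pt t x)| ≤ C * (jb (t + rnorm x))⁻¹ *
          ((∑ i : Fin 10, |VZ i u (pt t x)|) * (∑ γ : Fin 4, |pd γ v (pt t x)|) +
           (∑ γ : Fin 4, |pd γ u (pt t x)|) * (∑ i : Fin 10, |VZ i v (pt t x)|)) := by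
  refine ⟨9, by norm_num, fun u v _ _ α β t ht x => ?_⟩
  set p := pt t x
  have hweight := one_add_sum_abs_mul_abs_wedge_le (y := lowerIndex p)
    (fun γ => Finset.single_le_sum (f := fun γ => |pd γ u p|) (fun _ _ => abs_nonneg _)
      (Finset.mem_univ γ))
    (fun γ => Finset.single_le_sum (f := fun γ => |pd γ v p|) (fun _ _ => abs_nonneg _)
      (Finset.mem_univ γ))
    (sum_abs_pd_le_sum_abs_VZ u p) (sum_abs_pd_le_sum_abs_VZ v p)
    (abs_wedge_lowerIndex_le u p) (abs_wedge_lowerIndex_le v p) α β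
  have hJ : 0 < jb (t + rnorm x) := Real.sqrt_pos.mpr (by positivity)
  rw [mul_right_comm, ← div_eq_mul_inv, le_div_iff₀ hJ]
  calc |Qab α β u v p| * jb (t + rnorm x)
      ≤ |wedge (fun γ => pd γ u p) (fun γ => pd γ v p) α β| * (1 + ∑ k, |lowerIndex p k|) :=
        mul_le_mul_of_nonneg_left (jb_le_one_add_sum_abs_lowerIndex ht x) (abs_nonneg _)
    _ ≤ _ := by rw [mul_comm]; convert hweight using 2; norm_num
end
end

section
/- There is a universal constant C>0 such that for every smooth u:ℝ×ℝ³→ℝ, every a∈{1,2,3}, and all (t,x)∈[0,∞)×ℝ³ with x≠0: |G_a u(t,x)| ≤ C ⟨t+|x|⟩^{-1} ( |Su(t,x)| + Σ_{Z∈V} |Zu(t,x)| ). -/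
open MeasureTheory Real

noncomputable section

set_option maxHeartbeats 1000000

lemma helper (t r xa xb xc d0 da db dc S L Oab Oac M : ℝ)
    (hr : 0 < r) (hr2 : r^2 = xa^2+xb^2+xc^2) (ht : 0 ≤ t)
    (hS : S = t*d0 + xa*da + xb*db + xc*dc)
    (hL : L = xa*d0 + t*da)
    (hOab : Oab = xa*db - xb*da)
    (hOac : Oac = xa*dc - xc*da)
    (hM : |S| + |d0| + |da| + |L| + |Oab| + |Oac| ≤ M) :
    |xa/r*d0 + da| ≤ 2 * (jb (t+r))⁻¹ * M := by
  have hM0 : 0 ≤ M := le_trans (by positivity) hM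
  have hjb : 0 < jb (t+r) := Real.sqrt_pos.mpr (by positivity)
  have hxa : |xa| ≤ r := by nlinarith [sq_abs xa, abs_nonneg xa, sq_nonneg xb, sq_nonneg xc]
  have hxb : |xb| ≤ r := by nlinarith [sq_abs xb, abs_nonneg xb, sq_nonneg xa, sq_nonneg xc]
  have hxc : |xc| ≤ r := by nlinarith [sq_abs xc, abs_nonneg xc, sq_nonneg xa, sq_nonneg xb]
  have har : |xa / r| ≤ 1 := by rw [abs_div, abs_of_pos hr, div_le_one hr]; exact hxa
  have hbr : |xb / r| ≤ 1 := by rw [abs_div, abs_of_pos hr, div_le_one hr]; exact hxb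
  have hcr : |xc / r| ≤ 1 := by rw [abs_div, abs_of_pos hr, div_le_one hr]; exact hxc
  rcases le_total (t + r) 1 with h1 | h1
  · -- small case
    have hjb2 : jb (t+r) ≤ 2 := by
      have h5 : 1+(t+r)^2 ≤ (2:ℝ)^2 := by nlinarith
      have h6 := Real.sqrt_le_sqrt h5
      rwa [Real.sqrt_sq (by norm_num : (0:ℝ) ≤ 2)] at h6
    have h2 : (1:ℝ) ≤ 2 * (jb (t+r))⁻¹ := by
      have := inv_anti₀ hjb hjb2
      linarith
    have hG : |xa/r*d0 + da| ≤ M := by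
      calc |xa/r*d0 + da| ≤ |xa/r*d0| + |da| := abs_add_le _ _
        _ = |xa / r| * |d0| + |da| := by rw [abs_mul]
        _ ≤ 1 * |d0| + |da| := by
            have := mul_le_mul_of_nonneg_right har (abs_nonneg d0); linarith
        _ ≤ M := by
            have := abs_nonneg S; have := abs_nonneg L; have := abs_nonneg Oab
            have := abs_nonneg Oac; linarith
    calc |xa/r*d0 + da| ≤ M := hG
      _ ≤ 2 * (jb (t+r))⁻¹ * M := le_mul_of_one_le_left hM0 h2
  · -- large case
    have hjb2 : jb (t+r) ≤ 2*(t+r) := by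
      have h5 : 1+(t+r)^2 ≤ (2*(t+r))^2 := by nlinarith
      have h6 := Real.sqrt_le_sqrt h5
      rwa [Real.sqrt_sq (by positivity)] at h6
    have htr : 0 < t + r := by linarith
    have key : (t+r)*(xa/r*d0 + da) = (xa/r)*S + L + (xb/r)*(-Oab) + (xc/r)*(-Oac) := by
      rw [hS, hL, hOab, hOac]; field_simp; linear_combination da * hr2
    have hbd : (t+r)*|xa/r*d0 + da| ≤ M := by
      have habs : |(t+r)*(xa/r*d0 + da)| ≤ M := by
        rw [key]
        calc |(xa/r)*S + L + (xb/r)*(-Oab) + (xc/r)*(-Oac)|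
            ≤ |(xa/r)*S + L + (xb/r)*(-Oab)| + |(xc/r)*(-Oac)| := abs_add_le _ _
          _ ≤ |(xa/r)*S + L| + |(xb/r)*(-Oab)| + |(xc/r)*(-Oac)| := by
              have := abs_add_le ((xa/r)*S + L) ((xb/r)*(-Oab)); linarith
          _ ≤ |(xa/r)*S| + |L| + |(xb/r)*(-Oab)| + |(xc/r)*(-Oac)| := by
              have := abs_add_le ((xa/r)*S) L; linarith
          _ = |xa / r| * |S| + |L| + |xb / r| * |Oab| + |xc / r| * |Oac| := by
              rw [abs_mul, abs_mul, abs_mul, abs_neg, abs_neg]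
          _ ≤ M := by
            have h7 := mul_le_mul_of_nonneg_right har (abs_nonneg S)
            have h8 := mul_le_mul_of_nonneg_right hbr (abs_nonneg Oab)
            have h9 := mul_le_mul_of_nonneg_right hcr (abs_nonneg Oac)
            have := abs_nonneg d0; have := abs_nonneg da
            linarith
      rwa [abs_mul, abs_of_pos htr] at habs
    have hinv : (t+r)⁻¹ ≤ 2 * (jb (t+r))⁻¹ := by
      have h4 : (2*(t+r))⁻¹ ≤ (jb (t+r))⁻¹ := inv_anti₀ hjb hjb2
      rw [mul_inv] at h4
      calc (t+r)⁻¹ = 2 * (2⁻¹ * (t+r)⁻¹) := by ring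
        _ ≤ 2 * (jb (t+r))⁻¹ := by linarith
    calc |xa/r*d0 + da| ≤ (t+r)⁻¹ * M := by
          rw [← sub_nonneg] at hbd ⊢
          have : (t+r)⁻¹ * M - |xa/r*d0 + da| = (t+r)⁻¹ * (M - (t+r)*|xa/r*d0 + da|) := by
            field_simp
          rw [this]; positivity
      _ ≤ 2 * (jb (t+r))⁻¹ * M := mul_le_mul_of_nonneg_right hinv hM0

/-- the good derivatives are controlled by ⟨t+|x|⟩⁻¹ (|Su| + Σ|Zu|). -/
theorem stmt_8 :
    ∃ C : ℝ, 0 < C ∧ ∀ u : Pt → ℝ, ContDiff ℝ (⊤ : ℕ∞) u →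
      ∀ a : Fin 3, ∀ (t : ℝ), 0 ≤ t → ∀ x : Sp, x ≠ 0 →
        |Ga a u (pt t x)| ≤ C * (jb (t + rnorm x))⁻¹ *
          (|Sc u (pt t x)| + ∑ i : Fin 10, |VZ i u (pt t x)|) := by
  refine ⟨2, two_pos, ?_⟩
  intro u _ a t ht x hx
  set p := pt t x with hp
  set r := rnorm x with hrdef
  set d0 := pd 0 u p
  set d1 := pd 1 u p
  set d2 := pd 2 u p
  set d3 := pd 3 u p
  have hr0 : 0 ≤ r := Real.sqrt_nonneg _
  have hr2 : r ^ 2 = x 0 ^ 2 + x 1 ^ 2 + x 2 ^ 2 := by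
    rw [hrdef, rnorm, Real.sq_sqrt (by positivity), Fin.sum_univ_three]
  have hr : 0 < r := by
    rcases hr0.lt_or_eq with h | h
    · exact h
    · exfalso; apply hx; funext i
      have h0 : x 0 ^ 2 + x 1 ^ 2 + x 2 ^ 2 = 0 := by rw [← hr2, ← h]; ring
      have : ∀ j : Fin 3, x j ^ 2 = 0 := by
        intro j; fin_cases j
        · show x 0 ^ 2 = 0; nlinarith [sq_nonneg (x 1), sq_nonneg (x 2)]
        · show x 1 ^ 2 = 0; nlinarith [sq_nonneg (x 0), sq_nonneg (x 2)]
        · show x 2 ^ 2 = 0; nlinarith [sq_nonneg (x 0), sq_nonneg (x 1)]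
      simpa using pow_eq_zero_iff (n := 2) (by norm_num) |>.mp (this i)
  have hsq : Real.sqrt ((p 1) ^ 2 + (p 2) ^ 2 + (p 3) ^ 2) = r := by
    rw [hrdef, rnorm, Fin.sum_univ_three]; rfl
  have hSc : Sc u p = t * d0 + x 0 * d1 + x 1 * d2 + x 2 * d3 := by
    rw [Sc, Fin.sum_univ_four]; rfl
  have hsum : ∑ i : Fin 10, |VZ i u p| =
      |d0| + |d1| + |d2| + |d3| + |Omg 1 2 u p| + |Omg 1 3 u p| + |Omg 2 3 u p|
        + |Lb 1 u p| + |Lb 2 u p| + |Lb 3 u p| := by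
    simp [VZ, Fin.sum_univ_succ]; ring
  have hO12 : Omg 1 2 u p = x 0 * d2 - x 1 * d1 := rfl
  have hO13 : Omg 1 3 u p = x 0 * d3 - x 2 * d1 := rfl
  have hO23 : Omg 2 3 u p = x 1 * d3 - x 2 * d2 := rfl
  have hL1 : Lb 1 u p = x 0 * d0 + t * d1 := rfl
  have hL2 : Lb 2 u p = x 1 * d0 + t * d2 := rfl
  have hL3 : Lb 3 u p = x 2 * d0 + t * d3 := rfl
  fin_cases a
  · show |(p 1 / Real.sqrt ((p 1)^2 + (p 2)^2 + (p 3)^2)) * d0 + d1| ≤ _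
    rw [hsq]
    refine helper t r (x 0) (x 1) (x 2) d0 d1 d2 d3 (Sc u p) (Lb 1 u p)
      (Omg 1 2 u p) (Omg 1 3 u p) _ hr hr2 ht hSc hL1 hO12 hO13 ?_
    rw [hsum]
    have := abs_nonneg d2; have := abs_nonneg d3
    have := abs_nonneg (Omg 2 3 u p); have := abs_nonneg (Lb 2 u p)
    have := abs_nonneg (Lb 3 u p)
    linarith
  · show |(p 2 / Real.sqrt ((p 1)^2 + (p 2)^2 + (p 3)^2)) * d0 + d2| ≤ _
    rw [hsq]
    refine helper t r (x 1) (x 0) (x 2) d0 d2 d1 d3 (Sc u p) (Lb 2 u p)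
      (-(Omg 1 2 u p)) (Omg 2 3 u p) _ hr (by rw [hr2]; ring) ht
      (by rw [hSc]; ring) hL2 (by rw [hO12]; ring) hO23 ?_
    rw [hsum, abs_neg]
    have := abs_nonneg d1; have := abs_nonneg d3
    have := abs_nonneg (Omg 1 3 u p); have := abs_nonneg (Lb 1 u p)
    have := abs_nonneg (Lb 3 u p)
    linarith
  · show |(p 3 / Real.sqrt ((p 1)^2 + (p 2)^2 + (p 3)^2)) * d0 + d3| ≤ _
    rw [hsq]
    refine helper t r (x 2) (x 0) (x 1) d0 d3 d1 d2 (Sc u p) (Lb 3 u p)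
      (-(Omg 1 3 u p)) (-(Omg 2 3 u p)) _ hr (by rw [hr2]; ring) ht
      (by rw [hSc]; ring) hL3 (by rw [hO13]; ring) (by rw [hO23]; ring) ?_
    rw [hsum, abs_neg, abs_neg]
    have := abs_nonneg d1; have := abs_nonneg d2
    have := abs_nonneg (Omg 1 2 u p); have := abs_nonneg (Lb 1 u p)
    have := abs_nonneg (Lb 2 u p)
    linarith
end
end

section
/- (Interpolated Hardy inequality) There is a universal constant C>0 such that for every δ with 0<δ<1 and every smooth compactly supported function f:ℝ³→ℝ: ‖ |x|^{-δ} f ‖_{L²(ℝ³)} ≤ C ‖∇f‖_{L²(ℝ³)}^{δ} ‖f‖_{L²(ℝ³)}^{1−δ}. -/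
open MeasureTheory Real

noncomputable section

/-!
Hardy's inequality comes from one dimension: integrating `(r ^ (k + 1) G²)'` over `(0, ∞)`
gives `(k + 1) ∫ r ^ k G² = -2 ∫ r ^ (k + 1) G G'`, and AM-GM turns this into
`∫ r ^ k G² ≤ 4 / (k + 1)² ∫ r ^ (k + 2) G'²`. Applied along every ray in polar coordinates
(with `k = 0` in ℝ³) this bounds `‖f / |x|‖₂` by the `L²` norm of the radial derivative, hence by
`√12 ‖∇f‖₂`: the rays are parametrised by the unit sphere of the sup norm, whose points have
Euclidean length at most `√3`. Since `|x| ^ (-2δ) f² = (f² / |x|²) ^ δ (f²) ^ (1 - δ)`, Hölder's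
inequality with exponents `1 / δ` and `1 / (1 - δ)` interpolates between `‖f / |x|‖₂` and `‖f‖₂`.
-/

open Set Metric Module
open scoped ENNReal

theorem HasCompactSupport.integrable_pow_mul_sq {u : ℝ → ℝ} (hu : Continuous u)
    (hus : HasCompactSupport u) (j : ℕ) : Integrable fun r => r ^ j * u r ^ 2 := by
  have hus2 : HasCompactSupport fun r => u r ^ 2 :=
    hus.comp_left (g := fun t : ℝ => t ^ 2) (zero_pow two_ne_zero)
  exact ((continuous_pow j).mul (hu.pow 2)).integrable_of_hasCompactSupport hus2.mul_left

theorem integrableOn_Ioi_pow_mul_mul_deriv (k : ℕ) {G : ℝ → ℝ} (hG : ContDiff ℝ 1 G)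
    (hGs : HasCompactSupport G) : IntegrableOn (fun r => r ^ (k + 1) * G r * deriv G r) (Ioi 0) :=
  ((continuous_pow _).mul hG.continuous |>.mul (hG.continuous_deriv le_rfl))
    |>.integrable_of_hasCompactSupport hGs.deriv.mul_left |>.integrableOn

theorem add_one_mul_integral_Ioi_pow_mul_sq (k : ℕ) {G : ℝ → ℝ} (hG : ContDiff ℝ 1 G)
    (hGs : HasCompactSupport G) :
    (k + 1) * ∫ r in Ioi 0, r ^ k * G r ^ 2 =
      -(2 * ∫ r in Ioi 0, r ^ (k + 1) * G r * deriv G r) := by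
  have hderiv : ∀ r, deriv (fun r => r ^ (k + 1) * G r ^ 2) r =
      (k + 1) * (r ^ k * G r ^ 2) + 2 * (r ^ (k + 1) * G r * deriv G r) := fun r => by
    refine (((hasDerivAt_pow (k + 1) r).mul
      (((hG.differentiable one_ne_zero) r).hasDerivAt.pow 2)).deriv).trans ?_
    simp only [Pi.pow_apply, Nat.add_sub_cancel]
    push_cast
    ring
  have hF : HasCompactSupport fun r => r ^ (k + 1) * G r ^ 2 :=
    (hGs.comp_left (g := fun t : ℝ => t ^ 2) (zero_pow two_ne_zero)).mul_left
  have hF1 : ContDiff ℝ 1 fun r => r ^ (k + 1) * G r ^ 2 := (contDiff_id.pow _).mul (hG.pow 2)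
  have := hF.integral_Ioi_deriv_eq hF1 0
  rw [funext hderiv, integral_add
      ((hGs.integrable_pow_mul_sq hG.continuous k).integrableOn.const_mul _)
      ((integrableOn_Ioi_pow_mul_mul_deriv k hG hGs).const_mul _),
    integral_const_mul, integral_const_mul] at this
  simpa only [add_eq_zero_iff_eq_neg, zero_pow (Nat.succ_ne_zero k), zero_mul, neg_zero]
    using this

theorem integral_Ioi_pow_mul_sq_le (k : ℕ) {G : ℝ → ℝ} (hG : ContDiff ℝ 1 G)
    (hGs : HasCompactSupport G) :
    ∫ r in Ioi 0, r ^ k * G r ^ 2 ≤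
      4 / ((k : ℝ) + 1) ^ 2 * ∫ r in Ioi 0, r ^ (k + 2) * deriv G r ^ 2 := by
  have hA := (hGs.integrable_pow_mul_sq hG.continuous k).integrableOn (s := Ioi 0)
  have hB := (hGs.deriv.integrable_pow_mul_sq (hG.continuous_deriv le_rfl) (k + 2)).integrableOn
    (s := Ioi 0)
  have amgm : ∀ r ∈ Ioi (0 : ℝ), -(2 * (r ^ (k + 1) * G r * deriv G r)) ≤
      (k + 1) / 2 * (r ^ k * G r ^ 2) + 2 / (k + 1) * (r ^ (k + 2) * deriv G r ^ 2) := by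
    intro r hr
    have hsq : (k + 1) / 2 * (r ^ k * G r ^ 2) + 2 / (k + 1) * (r ^ (k + 2) * deriv G r ^ 2) +
        2 * (r ^ (k + 1) * G r * deriv G r) =
        (k + 1) / 2 * r ^ k * (G r + 2 / (k + 1) * r * deriv G r) ^ 2 := by
      field_simp
      ring
    have := mul_nonneg (mul_nonneg (by positivity : (0 : ℝ) ≤ (k + 1) / 2)
      (pow_nonneg hr.out.le k)) (sq_nonneg (G r + 2 / (k + 1) * r * deriv G r))
    linarith
  have hmono := setIntegral_mono_on ((integrableOn_Ioi_pow_mul_mul_deriv k hG hGs).const_mul 2).neg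
    ((hA.const_mul _).add (hB.const_mul _)) measurableSet_Ioi amgm
  simp only [Pi.neg_apply, Pi.add_apply] at hmono
  rw [integral_neg, integral_const_mul, integral_add (hA.const_mul _) (hB.const_mul _),
    integral_const_mul, integral_const_mul, ← add_one_mul_integral_Ioi_pow_mul_sq k hG hGs] at hmono
  calc ∫ r in Ioi 0, r ^ k * G r ^ 2
      = 2 / (k + 1) * ((k + 1) / 2 * ∫ r in Ioi 0, r ^ k * G r ^ 2) := by field_simp
    _ ≤ 2 / (k + 1) * (2 / (k + 1) * ∫ r in Ioi 0, r ^ (k + 2) * deriv G r ^ 2) :=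
        mul_le_mul_of_nonneg_left (by linarith) (by positivity)
    _ = 4 / ((k : ℝ) + 1) ^ 2 * ∫ r in Ioi 0, r ^ (k + 2) * deriv G r ^ 2 := by
        field_simp
        ring

theorem lintegral_Ioi_pow_mul_sq_le (k : ℕ) {G : ℝ → ℝ} (hG : ContDiff ℝ 1 G)
    (hGs : HasCompactSupport G) :
    ∫⁻ r in Ioi 0, ENNReal.ofReal (r ^ k * G r ^ 2) ≤
      ENNReal.ofReal (4 / ((k : ℝ) + 1) ^ 2) *
        ∫⁻ r in Ioi 0, ENNReal.ofReal (r ^ (k + 2) * deriv G r ^ 2) := by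
  have nonneg : ∀ (j : ℕ) (u : ℝ → ℝ), 0 ≤ᵐ[volume.restrict (Ioi 0)] fun r => r ^ j * u r ^ 2 :=
    fun j u => by
      filter_upwards [ae_restrict_mem measurableSet_Ioi] with r hr
      exact mul_nonneg (pow_nonneg hr.out.le j) (sq_nonneg _)
  rw [← ofReal_integral_eq_lintegral_ofReal
      (hGs.integrable_pow_mul_sq hG.continuous k).integrableOn (nonneg k G),
    ← ofReal_integral_eq_lintegral_ofReal
      (hGs.deriv.integrable_pow_mul_sq (hG.continuous_deriv le_rfl) (k + 2)).integrableOn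
      (nonneg (k + 2) (deriv G)),
    ← ENNReal.ofReal_mul (by positivity)]
  exact ENNReal.ofReal_le_ofReal (integral_Ioi_pow_mul_sq_le k hG hGs)

section NormedSpace

variable {E : Type*} [NormedAddCommGroup E] [NormedSpace ℝ E]

theorem lintegral_eq_lintegral_sphere_lintegral_Ioi [FiniteDimensional ℝ E] [MeasurableSpace E]
    [BorelSpace E] [Nontrivial E] (μ : Measure E) [μ.IsAddHaarMeasure] {g : E → ℝ≥0∞}
    (hg : Measurable g) :
    ∫⁻ x, g x ∂μ = ∫⁻ ω : sphere (0 : E) 1, (∫⁻ r in Ioi (0 : ℝ),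
      ENNReal.ofReal (r ^ (finrank ℝ E - 1)) * g (r • (ω : E))) ∂μ.toSphere := by
  have hg' : Measurable fun p : sphere (0 : E) 1 × Ioi (0 : ℝ) => g ((p.2 : ℝ) • (p.1 : E)) :=
    hg.comp (by fun_prop)
  calc ∫⁻ x, g x ∂μ = ∫⁻ x : ({0}ᶜ : Set E), g x ∂μ.comap Subtype.val := by
        rw [lintegral_subtype_comap (measurableSet_singleton 0).compl, restrict_compl_singleton]
    _ = ∫⁻ p, g ((p.2 : ℝ) • (p.1 : E))
          ∂μ.toSphere.prod (Measure.volumeIoiPow (finrank ℝ E - 1)) := by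
        rw [← (μ.measurePreserving_homeomorphUnitSphereProd).lintegral_comp hg']
        refine lintegral_congr fun x => ?_
        simp [smul_inv_smul₀ (norm_ne_zero_iff.mpr x.2)]
    _ = ∫⁻ ω, ∫⁻ r, g ((r : ℝ) • (ω : E)) ∂Measure.volumeIoiPow (finrank ℝ E - 1) ∂μ.toSphere :=
        lintegral_prod _ hg'.aemeasurable
    _ = _ := by
        refine lintegral_congr fun ω => ?_
        rw [Measure.volumeIoiPow, lintegral_withDensity_eq_lintegral_mul _ (by fun_prop)
          (show Measurable fun r : Ioi (0 : ℝ) => g ((r : ℝ) • (ω : E)) from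
            hg'.comp measurable_prodMk_left),
          ← lintegral_subtype_comap measurableSet_Ioi]
        rfl

theorem lintegral_Ioi_sq_div_norm_sq_smul_le (k : ℕ) {f : E → ℝ} (hf : ContDiff ℝ 1 f)
    (hfs : HasCompactSupport f) {ω : E} (hω : ‖ω‖ = 1) :
    ∫⁻ r in Ioi 0, ENNReal.ofReal (r ^ (k + 2)) * ENNReal.ofReal (f (r • ω) ^ 2 / ‖r • ω‖ ^ 2) ≤
      ENNReal.ofReal (4 / ((k : ℝ) + 1) ^ 2) * ∫⁻ r in Ioi 0, ENNReal.ofReal (r ^ (k + 2)) *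
        ENNReal.ofReal (fderiv ℝ f (r • ω) (‖r • ω‖⁻¹ • r • ω) ^ 2) := by
  set G : ℝ → ℝ := fun r => f (r • ω)
  have hG : ContDiff ℝ 1 G := hf.comp (contDiff_id.smul contDiff_const)
  have hGs : HasCompactSupport G :=
    hfs.comp_isClosedEmbedding (isClosedEmbedding_smul_left (norm_ne_zero_iff.mp (by simp [hω])))
  have hderiv : ∀ r : ℝ, deriv G r = fderiv ℝ f (r • ω) ω := fun r =>
    ((hf.differentiable one_ne_zero _).hasFDerivAt.comp_hasDerivAt r
      ((hasDerivAt_id r).smul_const ω)).deriv.trans (by simp)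
  have hnorm : ∀ r : ℝ, 0 < r → ‖r • ω‖ = r := fun r hr => by
    rw [norm_smul, hω, mul_one, Real.norm_of_nonneg hr.le]
  calc _ = ∫⁻ r in Ioi 0, ENNReal.ofReal (r ^ k * G r ^ 2) := by
        refine setLIntegral_congr_fun measurableSet_Ioi fun r (hr : 0 < r) => ?_
        rw [← ENNReal.ofReal_mul (by positivity), hnorm r hr]
        congr 1
        field_simp
        ring
    _ ≤ ENNReal.ofReal (4 / ((k : ℝ) + 1) ^ 2) *
          ∫⁻ r in Ioi 0, ENNReal.ofReal (r ^ (k + 2) * deriv G r ^ 2) :=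
        lintegral_Ioi_pow_mul_sq_le k hG hGs
    _ = _ := by
        congr 1
        refine setLIntegral_congr_fun measurableSet_Ioi fun r (hr : 0 < r) => ?_
        rw [← ENNReal.ofReal_mul (by positivity), hnorm r hr, inv_smul_smul₀ hr.ne', hderiv]

theorem lintegral_sq_div_norm_sq_le [FiniteDimensional ℝ E] [MeasurableSpace E] [BorelSpace E]
    (μ : Measure E) [μ.IsAddHaarMeasure] (hE : 3 ≤ finrank ℝ E) {f : E → ℝ}
    (hf : ContDiff ℝ 1 f) (hfs : HasCompactSupport f) :
    ∫⁻ x, ENNReal.ofReal (f x ^ 2 / ‖x‖ ^ 2) ∂μ ≤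
      ENNReal.ofReal (4 / ((finrank ℝ E : ℝ) - 2) ^ 2) *
        ∫⁻ x, ENNReal.ofReal (fderiv ℝ f x (‖x‖⁻¹ • x) ^ 2) ∂μ := by
  have : Nontrivial E := nontrivial_of_finrank_pos (R := ℝ) (by omega)
  obtain ⟨k, hk⟩ : ∃ k, finrank ℝ E = k + 3 := ⟨_, (Nat.sub_add_cancel hE).symm⟩
  have hfm : Measurable f := hf.continuous.measurable
  have hDfm : Measurable fun x => fderiv ℝ f x (‖x‖⁻¹ • x) :=
    ContinuousLinearMap.measurable_apply₂.comp
      ((hf.continuous_fderiv one_ne_zero).measurable.prodMk (by fun_prop))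
  rw [lintegral_eq_lintegral_sphere_lintegral_Ioi μ (by fun_prop),
    lintegral_eq_lintegral_sphere_lintegral_Ioi μ (by fun_prop),
    ← lintegral_const_mul' _ _ ENNReal.ofReal_ne_top, hk,
    show (↑(k + 3) : ℝ) - 2 = k + 1 by push_cast; ring]
  exact lintegral_mono fun ω => lintegral_Ioi_sq_div_norm_sq_smul_le k hf hfs (by simp)

end NormedSpace

theorem lintegral_ofReal_sq_ne_top {X : Type*} [TopologicalSpace X] [MeasurableSpace X]
    [OpensMeasurableSpace X] (μ : Measure X) [IsFiniteMeasureOnCompacts μ] {g : X → ℝ}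
    (hg : Continuous g) (hgs : HasCompactSupport g) :
    ∫⁻ x, ENNReal.ofReal (g x ^ 2) ∂μ ≠ ∞ := by
  have hgs2 : HasCompactSupport fun x => g x ^ 2 :=
    hgs.comp_left (g := fun t : ℝ => t ^ 2) (zero_pow two_ne_zero)
  exact ((hg.pow 2).integrable_of_hasCompactSupport hgs2).lintegral_lt_top.ne

theorem rpow_half_le_of_le_mul_rpow_mul_rpow {a b c C δ : ℝ} (ha : 0 ≤ a) (hb : 0 ≤ b)
    (hc : 0 ≤ c) (hC : 1 ≤ C) (hδ : δ ≤ 1) (h : a ≤ (C * b) ^ δ * c ^ (1 - δ)) :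
    a ^ (1 / 2 : ℝ) ≤ C ^ (1 / 2 : ℝ) * (b ^ (1 / 2 : ℝ)) ^ δ * (c ^ (1 / 2 : ℝ)) ^ (1 - δ) :=
  calc a ^ (1 / 2 : ℝ) ≤ ((C * b) ^ δ * c ^ (1 - δ)) ^ (1 / 2 : ℝ) := by gcongr
    _ = (C ^ (1 / 2 : ℝ)) ^ δ * (b ^ (1 / 2 : ℝ)) ^ δ * (c ^ (1 / 2 : ℝ)) ^ (1 - δ) := by
        rw [mul_rpow (by positivity) (by positivity), mul_rpow (by positivity) hb,
          mul_rpow (by positivity) (by positivity), ← rpow_mul (by positivity), ← rpow_mul hb,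
          ← rpow_mul hc, ← rpow_mul (by positivity), ← rpow_mul hb, ← rpow_mul hc,
          mul_comm δ, mul_comm (1 - δ)]
    _ ≤ C ^ (1 / 2 : ℝ) * (b ^ (1 / 2 : ℝ)) ^ δ * (c ^ (1 / 2 : ℝ)) ^ (1 - δ) := by
        gcongr
        exact rpow_le_self_of_one_le (one_le_rpow hC (by norm_num)) hδ

theorem L2norm_eq_toReal_lintegral {g : Sp → ℝ} (hg : AEStronglyMeasurable g) :
    L2norm g = (∫⁻ x, ENNReal.ofReal (g x ^ 2)).toReal ^ (1 / 2 : ℝ) := by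
  rw [L2norm, integral_eq_lintegral_of_nonneg_ae (ae_of_all _ fun x => sq_nonneg _) (hg.pow 2)]

theorem fderiv_apply_eq_sum_pd3 (f : Sp → ℝ) (x v : Sp) :
    fderiv ℝ f x v = ∑ a, v a * pd3 a f x := by
  conv_lhs => rw [pi_eq_sum_univ' v]
  simp [pd3]

-- `‖·‖` on `Sp = Fin 3 → ℝ` is the sup norm; the Euclidean norm is `rnorm`.
theorem sq_fderiv_apply_le_three_mul_gradNorm_sq (f : Sp → ℝ) (x : Sp) {v : Sp} (hv : ‖v‖ ≤ 1) :
    fderiv ℝ f x v ^ 2 ≤ 3 * gradNorm f x ^ 2 := by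
  rw [fderiv_apply_eq_sum_pd3, gradNorm, sq_sqrt (by positivity)]
  have hv2 : ∑ a, v a ^ 2 ≤ 3 := calc
    ∑ a, v a ^ 2 ≤ ∑ _a : Fin 3, (1 : ℝ) := Finset.sum_le_sum fun a _ =>
        (sq_le_one_iff_abs_le_one _).2 ((norm_le_pi_norm v a).trans hv)
    _ = 3 := by simp
  calc (∑ a, v a * pd3 a f x) ^ 2 ≤ (∑ a, v a ^ 2) * ∑ a, pd3 a f x ^ 2 :=
        Finset.sum_mul_sq_le_sq_mul_sq _ _ _
    _ ≤ 3 * ∑ a, pd3 a f x ^ 2 := by gcongr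

theorem norm_le_rnorm (x : Sp) : ‖x‖ ≤ rnorm x := by
  refine (pi_norm_le_iff_of_nonneg (sqrt_nonneg _)).2 fun a => ?_
  rw [Real.norm_eq_abs, ← sqrt_sq_eq_abs]
  exact sqrt_le_sqrt (Finset.single_le_sum (fun b _ => sq_nonneg (x b)) (Finset.mem_univ a))

theorem continuous_gradNorm {f : Sp → ℝ} (hf : ContDiff ℝ 1 f) : Continuous (gradNorm f) := by
  have := hf.continuous_fderiv one_ne_zero
  unfold gradNorm pd3
  fun_prop

theorem HasCompactSupport.gradNorm {f : Sp → ℝ} (hfs : HasCompactSupport f) :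
    HasCompactSupport (gradNorm f) :=
  (hfs.fderiv ℝ).comp_left (g := fun L : Sp →L[ℝ] ℝ => √(∑ a, L (Pi.single a 1) ^ 2)) (by simp)

theorem lintegral_sq_div_norm_sq_le_twelve_mul {f : Sp → ℝ} (hf : ContDiff ℝ 1 f)
    (hfs : HasCompactSupport f) :
    ∫⁻ x, ENNReal.ofReal (f x ^ 2 / ‖x‖ ^ 2) ≤ 12 * ∫⁻ x, ENNReal.ofReal (gradNorm f x ^ 2) := by
  have hdim : finrank ℝ Sp = 3 := by simp
  calc _ ≤ 4 * ∫⁻ x, ENNReal.ofReal (fderiv ℝ f x (‖x‖⁻¹ • x) ^ 2) := by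
        convert lintegral_sq_div_norm_sq_le volume hdim.ge hf hfs using 2
        norm_num [hdim]
    _ ≤ 4 * ∫⁻ x, ENNReal.ofReal 3 * ENNReal.ofReal (gradNorm f x ^ 2) := by
        gcongr with x
        rw [← ENNReal.ofReal_mul zero_le_three]
        refine ENNReal.ofReal_le_ofReal (sq_fderiv_apply_le_three_mul_gradNorm_sq f x ?_)
        rw [norm_smul, norm_inv, norm_norm]
        exact inv_mul_le_one_of_le₀ le_rfl (norm_nonneg _)
    _ = 12 * ∫⁻ x, ENNReal.ofReal (gradNorm f x ^ 2) := by
        rw [lintegral_const_mul' _ _ ENNReal.ofReal_ne_top, ← mul_assoc]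
        norm_num

theorem sq_rnorm_rpow_neg_mul_le {δ : ℝ} (hδ : 0 ≤ δ) {x : Sp} (hx : x ≠ 0) (y : ℝ) :
    (rnorm x ^ (-δ) * y) ^ 2 ≤ (y ^ 2 / ‖x‖ ^ 2) ^ δ * (y ^ 2) ^ (1 - δ) := by
  have hN : 0 < ‖x‖ := norm_pos_iff.2 hx
  have hR : 0 ≤ rnorm x := sqrt_nonneg _
  calc (rnorm x ^ (-δ) * y) ^ 2 = y ^ 2 / (rnorm x ^ 2) ^ δ := by
        rw [mul_pow, rpow_pow_comm hR, rpow_neg (sq_nonneg _), inv_mul_eq_div]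
    _ ≤ y ^ 2 / (‖x‖ ^ 2) ^ δ := by
        gcongr
        exact norm_le_rnorm x
    _ = (y ^ 2 / ‖x‖ ^ 2) ^ δ * (y ^ 2) ^ (1 - δ) := by
        rw [div_rpow (sq_nonneg _) (sq_nonneg _), div_mul_eq_mul_div,
          ← rpow_add' (sq_nonneg _) (by norm_num), add_sub_cancel, rpow_one]

theorem lintegral_sq_rnorm_rpow_neg_mul_le {δ : ℝ} (hδ0 : 0 ≤ δ) (hδ1 : δ ≤ 1) {f : Sp → ℝ}
    (hf : Measurable f) :
    ∫⁻ x, ENNReal.ofReal ((rnorm x ^ (-δ) * f x) ^ 2) ≤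
      (∫⁻ x, ENNReal.ofReal (f x ^ 2 / ‖x‖ ^ 2)) ^ δ * (∫⁻ x, ENNReal.ofReal (f x ^ 2)) ^ (1 - δ) :=
  calc _ ≤ ∫⁻ x, ENNReal.ofReal (f x ^ 2 / ‖x‖ ^ 2) ^ δ * ENNReal.ofReal (f x ^ 2) ^ (1 - δ) := by
        refine lintegral_mono_ae ((volume.ae_ne 0).mono fun x hx => ?_)
        rw [ENNReal.ofReal_rpow_of_nonneg (by positivity) hδ0,
          ENNReal.ofReal_rpow_of_nonneg (by positivity) (by linarith),
          ← ENNReal.ofReal_mul (by positivity)]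
        exact ENNReal.ofReal_le_ofReal (sq_rnorm_rpow_neg_mul_le hδ0 hx _)
    _ ≤ _ := ENNReal.lintegral_mul_norm_pow_le (by fun_prop) (by fun_prop) hδ0 (by linarith)
        (by ring)

/-- interpolated Hardy inequality. -/
theorem stmt_13 :
    ∃ C : ℝ, 0 < C ∧ ∀ δ : ℝ, 0 < δ → δ < 1 →
      ∀ f : Sp → ℝ, ContDiff ℝ (⊤ : ℕ∞) f → HasCompactSupport f →
        L2norm (fun x => (rnorm x) ^ (-δ) * f x) ≤
          C * (L2norm (fun x => gradNorm f x)) ^ δ * (L2norm f) ^ (1 - δ) := by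
  refine ⟨12 ^ (1 / 2 : ℝ), by positivity, fun δ hδ0 hδ1 f hf hfs => ?_⟩
  have hf1 : ContDiff ℝ 1 f := hf.of_le (by exact_mod_cast le_top)
  have hfm : Measurable f := hf1.continuous.measurable
  have hT : ∫⁻ x, ENNReal.ofReal ((rnorm x ^ (-δ) * f x) ^ 2) ≤
      (12 * ∫⁻ x, ENNReal.ofReal (gradNorm f x ^ 2)) ^ δ *
        (∫⁻ x, ENNReal.ofReal (f x ^ 2)) ^ (1 - δ) :=
    (lintegral_sq_rnorm_rpow_neg_mul_le hδ0.le hδ1.le hfm).trans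
      (by gcongr; exact lintegral_sq_div_norm_sq_le_twelve_mul hf1 hfs)
  have hD := lintegral_ofReal_sq_ne_top volume (continuous_gradNorm hf1) hfs.gradNorm
  have hJ := lintegral_ofReal_sq_ne_top volume hf1.continuous hfs
  rw [L2norm_eq_toReal_lintegral (by unfold rnorm; fun_prop),
    L2norm_eq_toReal_lintegral (continuous_gradNorm hf1).aestronglyMeasurable,
    L2norm_eq_toReal_lintegral hfm.aestronglyMeasurable]
  refine rpow_half_le_of_le_mul_rpow_mul_rpow ENNReal.toReal_nonneg ENNReal.toReal_nonneg
    ENNReal.toReal_nonneg (by norm_num) hδ1.le ?_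
  simpa [ENNReal.toReal_mul, ← ENNReal.toReal_rpow] using ENNReal.toReal_mono (by finiteness) hT
end
end
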